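/- Let M: A→B be a channel with |B| = d_B, and let N: A⊗D→B with |D| = d_B² be the channel that dephases D in the computational basis and applies the generalised Pauli unitary U^{jk} to the output of M controlled on the basis state |jk⟩ of D: N(ρ_A ⊗ |jk⟩⟨jk|) = U^{jk} M(ρ_A) U^{jk†}. Then the Holevo capacity of N equals log d_B - S_min(M). -/

import Mathlib

open Matrix Kronecker BigOperators ComplexOrder

noncomputable section

namespace QI

/-- A density matrix: positive semidefinite with unit trace. -/
def IsDensity {A : Type*} [Fintype A] (ρ : Matrix A A ℂ) : Prop :=
  ρ.PosSemidef ∧ ρ.trace = 1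

/-- Von Neumann entropy `S(ρ) = -∑ λᵢ log λᵢ` of (the eigenvalues of) a Hermitian matrix. -/
def vnEntropy {A : Type*} [Fintype A] [DecidableEq A] (ρ : Matrix A A ℂ) : ℝ :=
  if h : ρ.IsHermitian then -∑ i, (h.eigenvalues i) * Real.log (h.eigenvalues i) else 0

/-- Partial trace over the first tensor factor. -/
def ptraceLeft {A B : Type*} [Fintype A] (σ : Matrix (A × B) (A × B) ℂ) : Matrix B B ℂ :=
  Matrix.of fun i j => ∑ a, σ (a, i) (a, j)

/-- Partial trace over the second tensor factor. -/
def ptraceRight {A B : Type*} [Fintype B] (σ : Matrix (A × B) (A × B) ℂ) : Matrix A A ℂ :=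
  Matrix.of fun i j => ∑ b, σ (i, b) (j, b)

/-- Conditional entropy `S(B|B')_σ = S(σ_{BB'}) - S(σ_{B'})`, where the matrix is
indexed by `B × B'` and the first factor is the conditioned-upon... i.e. traced-out one. -/
def condEntropy {B B' : Type*} [Fintype B] [DecidableEq B] [Fintype B'] [DecidableEq B']
    (σ : Matrix (B × B') (B × B') ℂ) : ℝ :=
  vnEntropy σ - vnEntropy (ptraceLeft σ)

/-- The extension `M ⊗ id_E` of a map on matrices to an ancilla system `E`. -/
def tensorExt {A B E : Type*} (M : Matrix A A ℂ → Matrix B B ℂ)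
    (σ : Matrix (A × E) (A × E) ℂ) : Matrix (B × E) (B × E) ℂ :=
  Matrix.of fun p q => M (Matrix.of fun a a' => σ (a, p.2) (a', q.2)) p.1 q.1

/-- A quantum channel: linear, completely positive (every finite ancilla extension preserves
positive semidefiniteness) and trace preserving. -/
def IsCPTP {A B : Type*} [Fintype A] [Fintype B] (M : Matrix A A ℂ → Matrix B B ℂ) : Prop :=
  (∀ (c : ℂ) (ρ σ : Matrix A A ℂ), M (c • ρ + σ) = c • M ρ + M σ) ∧
  (∀ (k : ℕ) (σ : Matrix (A × Fin k) (A × Fin k) ℂ), σ.PosSemidef →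
      (tensorExt M σ).PosSemidef) ∧
  (∀ ρ : Matrix A A ℂ, (M ρ).trace = ρ.trace)

/-- The rank-one projector `|ψ⟩⟨ψ|`. -/
def pureState {A : Type*} (ψ : A → ℂ) : Matrix A A ℂ :=
  Matrix.of fun a a' => ψ a * star (ψ a')

/-- `ψ` is a unit vector. -/
def IsUnitVec {A : Type*} [Fintype A] (ψ : A → ℂ) : Prop :=
  ∑ a, Complex.normSq (ψ a) = 1

/-- Minimum output entropy of a channel: infimum of `S(M(|ψ⟩⟨ψ|))` over unit vectors `ψ`. -/
def Smin {A B : Type*} [Fintype A] [Fintype B] [DecidableEq B]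
    (M : Matrix A A ℂ → Matrix B B ℂ) : ℝ :=
  sInf {x | ∃ ψ : A → ℂ, IsUnitVec ψ ∧ x = vnEntropy (M (pureState ψ))}

/-- Separability: a convex combination of product states. -/
def IsSeparable {A B : Type*} [Fintype A] [Fintype B]
    (σ : Matrix (A × B) (A × B) ℂ) : Prop :=
  ∃ (k : ℕ) (p : Fin k → ℝ) (α : Fin k → Matrix A A ℂ) (β : Fin k → Matrix B B ℂ),
    (∀ i, 0 ≤ p i) ∧ (∀ i, IsDensity (α i)) ∧ (∀ i, IsDensity (β i)) ∧
    (∑ i, p i = 1) ∧ σ = ∑ i, (p i : ℂ) • (α i ⊗ₖ β i)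

end QI

namespace QI

/-- The Heisenberg–Weyl unitaries `U^{jk} = Xˢʰⁱᶠᵗ^j Zᵖʰᵃˢᵉ^k` on `ℂ^d`:
`(U^{jk})_{a,b} = δ_{a, b+j} ω^{k·b}` with `ω = e^{2πi/d}`. -/
def weyl (d : ℕ) [NeZero d] (j k : Fin d) : Matrix (Fin d) (Fin d) ℂ :=
  Matrix.of fun a b => if a = b + j then
    Complex.exp (2 * (Real.pi : ℂ) * Complex.I * ((k : ℕ) : ℂ) * ((b : ℕ) : ℂ) / (d : ℂ))
  else 0

end QI

namespace QI

/-- Holevo capacity `χ(N) = sup {S(N(∑ pₓ ψₓ)) - ∑ pₓ S(N(ψₓ))}` over pure-state ensembles. -/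
def holevo {A B : Type*} [Fintype A] [Fintype B] [DecidableEq B]
    (N : Matrix A A ℂ → Matrix B B ℂ) : ℝ :=
  sSup {x | ∃ (k : ℕ) (p : Fin k → ℝ) (ψ : Fin k → (A → ℂ)),
    (∀ i, 0 ≤ p i) ∧ (∑ i, p i = 1) ∧ (∀ i, IsUnitVec (ψ i)) ∧
    x = vnEntropy (N (∑ i, (p i : ℂ) • pureState (ψ i)))
        - ∑ i, p i * vnEntropy (N (pureState (ψ i)))}

/-- Shor's construction: the input `D = Fin d × Fin d` is dephased in the computational
basis and controls which generalised Pauli unitary is applied to the output of `M`. -/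
def shorChannel {A : Type*} (d : ℕ) [NeZero d]
    (M : Matrix A A ℂ → Matrix (Fin d) (Fin d) ℂ)
    (σ : Matrix (A × (Fin d × Fin d)) (A × (Fin d × Fin d)) ℂ) :
    Matrix (Fin d) (Fin d) ℂ :=
  ∑ j : Fin d, ∑ k : Fin d,
    weyl d j k * M (Matrix.of fun a a' => σ (a, (j, k)) (a', (j, k))) * (weyl d j k)ᴴ

end QI

section Aux
open Polynomial
namespace QI

variable {n : Type*} [Fintype n] [DecidableEq n]
variable {n : Type*} [Fintype n] [DecidableEq n]

lemma charmatrix_conj (U M : Matrix n n ℂ) (hU : U ∈ Matrix.unitaryGroup n ℂ) :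
    charmatrix (U * M * Uᴴ) = U.map (C : ℂ →+* ℂ[X]) * charmatrix M * Uᴴ.map (C : ℂ →+* ℂ[X]) := by
  have h1 : U * Uᴴ = 1 := Matrix.mem_unitaryGroup_iff.mp hU
  rw [charmatrix, charmatrix, Matrix.mul_sub, Matrix.sub_mul]
  congr 1
  · have h2 : (U.map (C : ℂ →+* ℂ[X])) * (Uᴴ.map (C : ℂ →+* ℂ[X])) = 1 := by
      rw [← Matrix.map_mul, h1, Matrix.map_one _ (map_zero _) (map_one _)]
    calc Matrix.diagonal (fun _ : n => (X : ℂ[X]))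
        = Matrix.scalar n (X : ℂ[X]) := rfl
      _ = (U.map (C : ℂ →+* ℂ[X])) * (Uᴴ.map (C : ℂ →+* ℂ[X])) * Matrix.scalar n (X : ℂ[X]) := by
          rw [h2, one_mul]
      _ = (U.map (C : ℂ →+* ℂ[X])) * Matrix.scalar n (X : ℂ[X]) * (Uᴴ.map (C : ℂ →+* ℂ[X])) := by
          rw [mul_assoc, mul_assoc, (Matrix.scalar_commute (X : ℂ[X]) (Commute.all _) _)]
      _ = _ := rfl
  · simp only [RingHom.mapMatrix_apply, ← Matrix.map_mul]

lemma charpoly_conj (U M : Matrix n n ℂ) (hU : U ∈ Matrix.unitaryGroup n ℂ) :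
    (U * M * Uᴴ).charpoly = M.charpoly := by
  have h2 : Uᴴ * U = 1 := Matrix.mem_unitaryGroup_iff'.mp hU
  rw [Matrix.charpoly, charmatrix_conj U M hU, det_mul, det_mul, mul_comm, ← mul_assoc,
    ← det_mul, ← Matrix.map_mul, h2, Matrix.map_one _ (map_zero _) (map_one _), det_one, one_mul]
  rfl

lemma charpoly_diag (d : n → ℂ) :
    (Matrix.diagonal d).charpoly = ∏ i, (X - C (d i)) := by
  have : charmatrix (Matrix.diagonal d) = Matrix.diagonal (fun i => (X : ℂ[X]) - C (d i)) := by
    ext i j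
    by_cases h : i = j <;>
      simp [charmatrix_apply, Matrix.diagonal_apply, h]
  rw [Matrix.charpoly, this, Matrix.det_diagonal]

/-- charpoly of a hermitian matrix splits by eigenvalues -/
lemma charpoly_isHermitian {A : Matrix n n ℂ} (hA : A.IsHermitian) :
    A.charpoly = ∏ i, (X - C ((hA.eigenvalues i : ℂ))) := by
  conv_lhs => rw [hA.spectral_theorem, Unitary.conjStarAlgAut_apply, Matrix.star_eq_conjTranspose]
  rw [charpoly_conj _ _ (Matrix.IsHermitian.eigenvectorUnitary hA).2, charpoly_diag]
  rfl

lemma eigenvalues_multiset {A : Matrix n n ℂ} (hA : A.IsHermitian) :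
    A.charpoly.roots = Finset.univ.val.map (fun i => ((hA.eigenvalues i : ℂ))) := by
  have hc : (fun i : n => X - C ((hA.eigenvalues i : ℂ)))
      = (fun a : ℂ => X - C a) ∘ (fun i => ((hA.eigenvalues i : ℂ))) := rfl
  rw [charpoly_isHermitian hA, Finset.prod_eq_multiset_prod, hc, ← Multiset.map_map,
    Polynomial.roots_multiset_prod_X_sub_C]

/-- sums of functions of eigenvalues are invariant under unitary conjugation -/
lemma sum_f_eigenvalues_conj {A B : Matrix n n ℂ} (U : Matrix n n ℂ)
    (hU : U ∈ Matrix.unitaryGroup n ℂ) (hB : B.IsHermitian) (hAB : A = U * B * Uᴴ)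
    (hA : A.IsHermitian) (f : ℝ → ℝ) :
    ∑ i, f (hA.eigenvalues i) = ∑ i, f (hB.eigenvalues i) := by
  have hchar : A.charpoly = B.charpoly := by rw [hAB, charpoly_conj _ _ hU]
  have hmul : Finset.univ.val.map (fun i => ((hA.eigenvalues i : ℂ)))
      = Finset.univ.val.map (fun i => ((hB.eigenvalues i : ℂ))) := by
    rw [← eigenvalues_multiset hA, ← eigenvalues_multiset hB, hchar]
  have hr : Finset.univ.val.map hA.eigenvalues = Finset.univ.val.map hB.eigenvalues := by
    have := congrArg (Multiset.map Complex.re) hmul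
    simpa [Multiset.map_map, Function.comp] using this
  calc ∑ i, f (hA.eigenvalues i) = ((Finset.univ.val.map hA.eigenvalues).map f).sum := by
        rw [Multiset.map_map]; rfl
    _ = ((Finset.univ.val.map hB.eigenvalues).map f).sum := by rw [hr]
    _ = ∑ i, f (hB.eigenvalues i) := by rw [Multiset.map_map]; rfl



lemma eigenvalues_smul_one (c : ℝ) (h : ((c:ℂ) • (1 : Matrix n n ℂ)).IsHermitian) (i : n) :
    h.eigenvalues i = c := by
  have hv := h.mulVec_eigenvectorBasis i
  set v := (WithLp.equiv 2 (n → ℂ)) (h.eigenvectorBasis i) with hvdef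
  rw [smul_mulVec, one_mulVec] at hv
  have hvne : v ≠ 0 := by
    intro h0
    apply h.eigenvectorBasis.orthonormal.ne_zero i
    have : h.eigenvectorBasis i = (WithLp.equiv 2 (n → ℂ)).symm v := by
      simp [hvdef]
    rw [this, h0]
    simp
  obtain ⟨a, ha⟩ := Function.ne_iff.mp hvne
  have := congrFun hv a
  simp only [Pi.smul_apply, smul_eq_mul, Complex.real_smul] at this
  have : (c : ℂ) = (h.eigenvalues i : ℂ) := mul_right_cancel₀ ha this
  exact_mod_cast this.symm

lemma trace_eq_sum_eigenvalues {A : Matrix n n ℂ} (hA : A.IsHermitian) :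
    A.trace = ∑ i, (hA.eigenvalues i : ℂ) := by
  conv_lhs => rw [hA.spectral_theorem, Unitary.conjStarAlgAut_apply]
  rw [Matrix.trace_mul_cycle, Unitary.coe_star_mul_self, one_mul, Matrix.trace_diagonal]
  rfl

lemma IsDensity.sum_eigenvalues_eq_one {ρ : Matrix n n ℂ} (hρ : IsDensity ρ) :
    ∑ i, hρ.1.1.eigenvalues i = 1 := by
  have := (trace_eq_sum_eigenvalues hρ.1.1).symm.trans hρ.2
  exact_mod_cast this

lemma IsDensity.eigenvalues_le_one {ρ : Matrix n n ℂ} (hρ : IsDensity ρ) (i : n) :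
    hρ.1.1.eigenvalues i ≤ 1 := by
  rw [← hρ.sum_eigenvalues_eq_one]
  exact Finset.single_le_sum (fun j _ => hρ.1.eigenvalues_nonneg j) (Finset.mem_univ i)

lemma vnEntropy_nonneg {ρ : Matrix n n ℂ} (hρ : IsDensity ρ) : 0 ≤ vnEntropy ρ := by
  rw [vnEntropy, dif_pos hρ.1.1, neg_nonneg]
  refine Finset.sum_nonpos fun i _ => mul_nonpos_of_nonneg_of_nonpos
    (hρ.1.eigenvalues_nonneg i) (Real.log_nonpos (hρ.1.eigenvalues_nonneg i)
    (hρ.eigenvalues_le_one i))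

lemma vnEntropy_le_log_card [Nonempty n] {ρ : Matrix n n ℂ} (hρ : IsDensity ρ) :
    vnEntropy ρ ≤ Real.log (Fintype.card n) := by
  set d : ℝ := (Fintype.card n : ℝ) with hd
  have hd0 : 0 < d := by positivity
  rw [vnEntropy, dif_pos hρ.1.1]
  have key : ∀ i, - (hρ.1.1.eigenvalues i * Real.log (hρ.1.1.eigenvalues i)) ≤
      1 / d - hρ.1.1.eigenvalues i + hρ.1.1.eigenvalues i * Real.log d := by
    intro i
    set l := hρ.1.1.eigenvalues i with hl
    have hl0 : 0 ≤ l := hρ.1.eigenvalues_nonneg i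
    rcases eq_or_lt_of_le hl0 with h0 | h0
    · rw [← h0]; simp; positivity
    · have h1 : 0 < 1 / (d * l) := by positivity
      have := Real.log_le_sub_one_of_pos h1
      have h2 : Real.log (1 / (d * l)) = - (Real.log d + Real.log l) := by
        rw [one_div, Real.log_inv, Real.log_mul (ne_of_gt hd0) (ne_of_gt h0)]
      rw [h2] at this
      have h3 : l * (- (Real.log d + Real.log l)) ≤ l * (1 / (d * l) - 1) :=
        mul_le_mul_of_nonneg_left this hl0
      have h4 : l * (1 / (d * l) - 1) = 1 / d - l := by
        field_simp
      rw [h4] at h3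
      nlinarith [h3]
  calc -∑ i, hρ.1.1.eigenvalues i * Real.log (hρ.1.1.eigenvalues i)
      = ∑ i, -(hρ.1.1.eigenvalues i * Real.log (hρ.1.1.eigenvalues i)) := by
        rw [← Finset.sum_neg_distrib]
    _ ≤ ∑ i, (1 / d - hρ.1.1.eigenvalues i + hρ.1.1.eigenvalues i * Real.log d) :=
        Finset.sum_le_sum fun i _ => key i
    _ = (Fintype.card n : ℝ) * (1/d) - (∑ i, hρ.1.1.eigenvalues i)
        + (∑ i, hρ.1.1.eigenvalues i) * Real.log d := by
        rw [Finset.sum_add_distrib, Finset.sum_sub_distrib, ← Finset.sum_mul]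
        simp [Finset.sum_const, mul_comm]
    _ = Real.log d := by
        rw [hρ.sum_eigenvalues_eq_one]
        field_simp
        rw [← hd]; ring

lemma vnEntropy_smul_one (d : ℕ) [NeZero d] :
    vnEntropy ((((d:ℕ):ℂ))⁻¹ • (1 : Matrix (Fin d) (Fin d) ℂ)) = Real.log d := by
  have hdr : (0:ℝ) < d := Nat.cast_pos.mpr (Nat.pos_of_ne_zero (NeZero.ne d))
  have hc : (((d:ℕ):ℂ))⁻¹ • (1 : Matrix (Fin d) (Fin d) ℂ)
      = ((((d:ℝ))⁻¹ : ℝ) : ℂ) • (1 : Matrix (Fin d) (Fin d) ℂ) := by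
    norm_num
  rw [hc]
  have hher : (((((d:ℝ))⁻¹ : ℝ) : ℂ) • (1 : Matrix (Fin d) (Fin d) ℂ)).IsHermitian := by
    unfold Matrix.IsHermitian
    rw [Matrix.conjTranspose_smul, Matrix.conjTranspose_one]
    congr 1
    exact Complex.conj_ofReal _
  rw [vnEntropy, dif_pos hher]
  have heig : ∀ i, hher.eigenvalues i = ((d:ℝ))⁻¹ := fun i => eigenvalues_smul_one _ hher i
  simp only [heig]
  rw [Finset.sum_const, Finset.card_univ, Fintype.card_fin, Real.log_inv]
  field_simp
  rw [nsmul_eq_mul]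
  field_simp


lemma vnEntropy_unitary_conj {U ρ : Matrix n n ℂ} (hU : U ∈ Matrix.unitaryGroup n ℂ)
    (hρ : ρ.IsHermitian) : vnEntropy (U * ρ * Uᴴ) = vnEntropy ρ := by
  have hH : (U * ρ * Uᴴ).IsHermitian := by
    unfold Matrix.IsHermitian
    simp [Matrix.conjTranspose_mul, Matrix.mul_assoc, hρ.eq]
  rw [vnEntropy, vnEntropy, dif_pos hH, dif_pos hρ,
    sum_f_eigenvalues_conj U hU hρ rfl hH (fun x => x * Real.log x)]

lemma klein_core {ι : Type*} [Fintype ι] (lam mu : ι → ℝ) (c : ι → ι → ℝ)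
    (hl : ∀ i, 0 ≤ lam i) (hm : ∀ j, 0 ≤ mu j)
    (hc : ∀ i j, 0 ≤ c i j) (hrow : ∀ i, ∑ j, c i j = 1) (hcol : ∀ j, ∑ i, c i j = 1)
    (hsl : ∑ i, lam i = 1) (hsm : ∑ j, mu j = 1)
    (hker : ∀ i j, mu j = 0 → lam i * c i j = 0) :
    ∑ j, (∑ i, lam i * c i j) * Real.log (mu j) ≤ ∑ i, lam i * Real.log (lam i) := by
  have key : ∀ i j, c i j * lam i - c i j * mu j ≤
      c i j * (lam i * Real.log (lam i)) - c i j * (lam i * Real.log (mu j)) := by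
    intro i j
    rcases eq_or_lt_of_le (hm j) with h0 | h0
    · have hz : lam i * c i j = 0 := hker i j h0.symm
      have h1 : c i j * lam i = 0 := by rw [mul_comm]; exact hz
      have h2 : c i j * (lam i * Real.log (lam i)) = 0 := by
        rw [← mul_assoc, h1, zero_mul]
      have h3 : c i j * (lam i * Real.log (mu j)) = 0 := by
        rw [← mul_assoc, h1, zero_mul]
      rw [h1, h2, h3, ← h0, mul_zero]
    · rcases eq_or_lt_of_le (hl i) with hi0 | hi0
      · rw [← hi0]
        simp only [mul_zero, zero_mul, zero_sub, sub_zero, mul_zero]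
        -- goal : c i j * 0 - c i j * mu j ≤ ...
        nlinarith [mul_nonneg (hc i j) (le_of_lt h0)]
      · have hdiv : (0:ℝ) < mu j / lam i := div_pos h0 hi0
        have hlog := Real.log_le_sub_one_of_pos hdiv
        rw [Real.log_div (ne_of_gt h0) (ne_of_gt hi0)] at hlog
        have h1 : lam i * (Real.log (mu j) - Real.log (lam i)) ≤ mu j - lam i := by
          have := mul_le_mul_of_nonneg_left hlog (le_of_lt hi0)
          calc lam i * (Real.log (mu j) - Real.log (lam i))
              ≤ lam i * (mu j / lam i - 1) := this
            _ = mu j - lam i := by field_simp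
        nlinarith [mul_le_mul_of_nonneg_left h1 (hc i j)]
  have hL : ∑ j, (∑ i, lam i * c i j) * Real.log (mu j)
      = ∑ i, ∑ j, c i j * (lam i * Real.log (mu j)) := by
    have h1 : ∀ j, (∑ i, lam i * c i j) * Real.log (mu j)
        = ∑ i, c i j * (lam i * Real.log (mu j)) := by
      intro j; rw [Finset.sum_mul]; apply Finset.sum_congr rfl; intro i _; ring
    simp only [h1]
    exact Finset.sum_comm
  have hR : ∑ i, lam i * Real.log (lam i)
      = ∑ i, ∑ j, c i j * (lam i * Real.log (lam i)) := by
    apply Finset.sum_congr rfl; intro i _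
    rw [← Finset.sum_mul, hrow i, one_mul]
  have hsum1 : ∑ i, ∑ j, c i j * lam i = 1 := by
    calc ∑ i, ∑ j, c i j * lam i = ∑ i, (∑ j, c i j) * lam i := by
          apply Finset.sum_congr rfl; intro i _; rw [Finset.sum_mul]
      _ = ∑ i, lam i := by
          apply Finset.sum_congr rfl; intro i _; rw [hrow i, one_mul]
      _ = 1 := hsl
  have hsum2 : ∑ i, ∑ j, c i j * mu j = 1 := by
    rw [Finset.sum_comm]
    calc ∑ j, ∑ i, c i j * mu j = ∑ j, (∑ i, c i j) * mu j := by
          apply Finset.sum_congr rfl; intro j _; rw [Finset.sum_mul]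
      _ = ∑ j, mu j := by
          apply Finset.sum_congr rfl; intro j _; rw [hcol j, one_mul]
      _ = 1 := hsm
  have hbig : ∑ i, ∑ j, (c i j * lam i - c i j * mu j)
      ≤ ∑ i, ∑ j, (c i j * (lam i * Real.log (lam i)) - c i j * (lam i * Real.log (mu j))) :=
    Finset.sum_le_sum fun i _ => Finset.sum_le_sum fun j _ => key i j
  simp only [Finset.sum_sub_distrib] at hbig
  rw [hL, hR]
  linarith [hbig, hsum1, hsum2]

lemma posSemidef_smul_real {q : ℝ} (hq : 0 ≤ q) {ρ : Matrix n n ℂ} (h : ρ.PosSemidef) :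
    ((q:ℂ) • ρ).PosSemidef := by
  refine Matrix.PosSemidef.of_dotProduct_mulVec_nonneg ?_ ?_
  · unfold Matrix.IsHermitian
    rw [Matrix.conjTranspose_smul, h.1.eq]
    congr 1
    exact Complex.conj_ofReal q
  · intro x
    have h2 := h.dotProduct_mulVec_nonneg x
    rw [Matrix.smul_mulVec, dotProduct_smul, smul_eq_mul]
    rw [Complex.le_def] at h2 ⊢
    simp only [Complex.zero_re, Complex.zero_im, Complex.mul_re, Complex.mul_im,
      Complex.ofReal_re, Complex.ofReal_im] at *
    constructor
    · nlinarith [h2.1]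
    · rw [← h2.2]; ring

lemma posSemidef_sum {ι : Type*} (s : Finset ι) (f : ι → Matrix n n ℂ)
    (h : ∀ i ∈ s, (f i).PosSemidef) : (∑ i ∈ s, f i).PosSemidef := by
  classical
  induction s using Finset.induction_on with
  | empty => simpa using Matrix.PosSemidef.zero
  | @insert i s hni ih =>
      rw [Finset.sum_insert hni]
      exact (h i (Finset.mem_insert_self i s)).add
        (ih fun j hj => h j (Finset.mem_insert_of_mem hj))

lemma vnEntropy_concave {ι : Type*} [Fintype ι] (q : ι → ℝ) (ρ : ι → Matrix n n ℂ)
    (hq : ∀ i, 0 ≤ q i) (hsq : ∑ i, q i = 1) (hρ : ∀ i, IsDensity (ρ i)) :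
    ∑ i, q i * vnEntropy (ρ i) ≤ vnEntropy (∑ i, (q i : ℂ) • ρ i) := by
  set σ : Matrix n n ℂ := ∑ i, (q i : ℂ) • ρ i with hσdef
  have hσPSD : σ.PosSemidef :=
    posSemidef_sum _ _ (fun i _ => posSemidef_smul_real (hq i) (hρ i).1)
  have hσtr : σ.trace = 1 := by
    rw [hσdef, Matrix.trace_sum]
    have : ∀ i, ((q i : ℂ) • ρ i).trace = (q i : ℂ) := by
      intro i; rw [Matrix.trace_smul, (hρ i).2, smul_eq_mul, mul_one]
    rw [Finset.sum_congr rfl fun i _ => this i, ← Complex.ofReal_sum, hsq, Complex.ofReal_one]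
  have hσ : IsDensity σ := ⟨hσPSD, hσtr⟩
  have hH : σ.IsHermitian := hσPSD.1
  set V : Matrix n n ℂ := (hH.eigenvectorUnitary : Matrix n n ℂ) with hVdef
  set μ : n → ℝ := hH.eigenvalues with hμdef
  have hVmem : V ∈ Matrix.unitaryGroup n ℂ := hH.eigenvectorUnitary.2
  have hdiag : Vᴴ * σ * V = Matrix.diagonal (RCLike.ofReal ∘ μ) :=
    by
      have h := hH.conjStarAlgAut_star_eigenvectorUnitary
      simp only [Unitary.conjStarAlgAut_apply, Unitary.coe_star, star_star] at h
      rw [hVdef, ← Matrix.star_eq_conjTranspose]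
      exact h
  -- the "pinching" coefficients
  set a : Matrix n n ℂ → n → ℝ := fun τ j => ((Vᴴ * τ * V) j j).re with hadef
  have ha_nonneg : ∀ τ : Matrix n n ℂ, τ.PosSemidef → ∀ j, 0 ≤ a τ j := by
    intro τ hτ j
    have h1 : (Vᴴ * τ * V).PosSemidef := hτ.conjTranspose_mul_mul_same V
    have h2 := h1.re_dotProduct_nonneg (Pi.single j 1)
    have h3 : dotProduct (star (Pi.single j 1 : n → ℂ)) ((Vᴴ * τ * V) *ᵥ Pi.single j 1)
        = (Vᴴ * τ * V) j j := by
      have hst : star (Pi.single j 1 : n → ℂ) = Pi.single j 1 := by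
        ext x; by_cases hx : x = j <;> simp [hx, Pi.single_apply]
      rw [Matrix.mulVec_single, hst]
      simp [dotProduct, Pi.single_apply, ite_mul]
    rw [h3] at h2
    exact h2
  have hμa : ∀ j, a σ j = μ j := by
    intro j
    rw [hadef]
    simp only [hdiag, Matrix.diagonal_apply_eq, Function.comp]
    rfl
  have ha_lin : ∀ j, a σ j = ∑ i, q i * a (ρ i) j := by
    intro j
    rw [hadef]
    simp only
    rw [hσdef, Matrix.mul_sum, Matrix.sum_mul]
    have h1 : ∀ i, (Vᴴ * ((q i : ℂ) • ρ i)) * V = (q i : ℂ) • (Vᴴ * ρ i * V) := by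
      intro i; rw [Matrix.mul_smul, Matrix.smul_mul]
    rw [Finset.sum_congr rfl fun i _ => h1 i, Matrix.sum_apply]
    rw [Complex.re_sum]
    apply Finset.sum_congr rfl; intro i _
    simp [Complex.mul_re]
  -- Klein inequality
  have hklein : ∀ τ : Matrix n n ℂ, IsDensity τ → (∀ j, μ j = 0 → a τ j = 0) →
      ∑ j, a τ j * Real.log (μ j) ≤ - vnEntropy τ := by
    intro τ hτ hk
    have hτH : τ.IsHermitian := hτ.1.1
    set W : Matrix n n ℂ := (hτH.eigenvectorUnitary : Matrix n n ℂ) with hWdef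
    set lam : n → ℝ := hτH.eigenvalues with hlamdef
    set T : Matrix n n ℂ := Wᴴ * V with hTdef
    set c : n → n → ℝ := fun i j => Complex.normSq (T i j) with hcdef
    have hTmem : T ∈ Matrix.unitaryGroup n ℂ := by
      rw [hTdef, ← Matrix.star_eq_conjTranspose]
      exact mul_mem (Unitary.star_mem hτH.eigenvectorUnitary.2) hVmem
    have hTT : Tᴴ * T = 1 := Matrix.mem_unitaryGroup_iff'.mp hTmem
    have hTT' : T * Tᴴ = 1 := Matrix.mem_unitaryGroup_iff.mp hTmem
    have hcol : ∀ j, ∑ i, c i j = 1 := by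
      intro j
      have h1 := congrFun (congrFun hTT j) j
      rw [Matrix.mul_apply] at h1
      have h2 : ∀ i, Tᴴ j i * T i j = (Complex.normSq (T i j) : ℂ) := by
        intro i
        rw [Matrix.conjTranspose_apply,
          (show star (T i j) = (starRingEnd ℂ) (T i j) from rfl),
          ← Complex.normSq_eq_conj_mul_self]
      rw [Finset.sum_congr rfl fun i _ => h2 i, ← Complex.ofReal_sum] at h1
      have h3 : ((∑ i, Complex.normSq (T i j) : ℝ) : ℂ) = 1 := by
        rw [h1]; simp [Matrix.one_apply]
      exact_mod_cast h3
    have hrow : ∀ i, ∑ j, c i j = 1 := by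
      intro i
      have h1 := congrFun (congrFun hTT' i) i
      rw [Matrix.mul_apply] at h1
      have h2 : ∀ j, T i j * Tᴴ j i = (Complex.normSq (T i j) : ℂ) := by
        intro j
        rw [Matrix.conjTranspose_apply,
          (show star (T i j) = (starRingEnd ℂ) (T i j) from rfl), Complex.mul_conj]
      rw [Finset.sum_congr rfl fun j _ => h2 j, ← Complex.ofReal_sum] at h1
      have h3 : ((∑ j, Complex.normSq (T i j) : ℝ) : ℂ) = 1 := by
        rw [h1]; simp [Matrix.one_apply]
      exact_mod_cast h3
    have haτ : ∀ j, a τ j = ∑ i, lam i * c i j := by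
      intro j
      have hτdecomp : Vᴴ * τ * V = Tᴴ * Matrix.diagonal (RCLike.ofReal ∘ lam) * T := by
        conv_lhs => rw [hτH.spectral_theorem, Unitary.conjStarAlgAut_apply]
        rw [hTdef]
        simp only [Matrix.conjTranspose_mul, Matrix.conjTranspose_conjTranspose,
          Matrix.star_eq_conjTranspose, Matrix.mul_assoc]
        rfl
      rw [hadef]
      simp only [hτdecomp]
      rw [Matrix.mul_apply]
      have h2 : ∀ k, (Tᴴ * Matrix.diagonal (RCLike.ofReal ∘ lam) : Matrix n n ℂ) j k * T k j
          = ((lam k * c k j : ℝ) : ℂ) := by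
        intro k
        rw [Matrix.mul_diagonal, Matrix.conjTranspose_apply]
        have : (starRingEnd ℂ) (T k j) * T k j = (Complex.normSq (T k j) : ℂ) :=
          (Complex.normSq_eq_conj_mul_self).symm
        push_cast
        calc (starRingEnd ℂ) (T k j) * ((lam k : ℂ)) * T k j
            = (lam k : ℂ) * ((starRingEnd ℂ) (T k j) * T k j) := by ring
          _ = (lam k : ℂ) * (Complex.normSq (T k j) : ℂ) := by rw [this]
          _ = _ := by rw [hcdef]
      rw [Finset.sum_congr rfl fun k _ => h2 k, ← Complex.ofReal_sum]
      rw [Complex.ofReal_re]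
    have hker : ∀ i j, μ j = 0 → lam i * c i j = 0 := by
      intro i j hj
      have h1 : a τ j = 0 := hk j hj
      rw [haτ j] at h1
      have h2 : ∀ k, 0 ≤ lam k * c k j := fun k =>
        mul_nonneg (hτ.1.eigenvalues_nonneg k) (Complex.normSq_nonneg _)
      exact (Finset.sum_eq_zero_iff_of_nonneg (fun k _ => h2 k)).mp h1 i (Finset.mem_univ i)
    have := klein_core lam μ c (fun i => hτ.1.eigenvalues_nonneg i)
      (fun j => hσPSD.eigenvalues_nonneg j)
      (fun i j => Complex.normSq_nonneg _) hrow hcol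
      hτ.sum_eigenvalues_eq_one hσ.sum_eigenvalues_eq_one hker
    calc ∑ j, a τ j * Real.log (μ j)
        = ∑ j, (∑ i, lam i * c i j) * Real.log (μ j) := by
          apply Finset.sum_congr rfl; intro j _; rw [haτ j]
      _ ≤ ∑ i, lam i * Real.log (lam i) := this
      _ = - vnEntropy τ := by rw [vnEntropy, dif_pos hτH, neg_neg]
  -- assemble
  have hEσ : - vnEntropy σ = ∑ j, μ j * Real.log (μ j) := by
    rw [vnEntropy, dif_pos hH, neg_neg]
  have hmain : - vnEntropy σ ≤ ∑ i, q i * (- vnEntropy (ρ i)) := by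
    rw [hEσ]
    calc ∑ j, μ j * Real.log (μ j)
        = ∑ j, (∑ i, q i * a (ρ i) j) * Real.log (μ j) := by
          apply Finset.sum_congr rfl; intro j _; rw [← ha_lin j, hμa j]
      _ = ∑ i, q i * (∑ j, a (ρ i) j * Real.log (μ j)) := by
          have h1 : ∀ j, (∑ i, q i * a (ρ i) j) * Real.log (μ j)
              = ∑ i, q i * (a (ρ i) j * Real.log (μ j)) := by
            intro j; rw [Finset.sum_mul]; apply Finset.sum_congr rfl; intro i _; ring
          simp only [h1]
          rw [Finset.sum_comm]
          apply Finset.sum_congr rfl; intro i _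
          rw [Finset.mul_sum]
      _ ≤ ∑ i, q i * (- vnEntropy (ρ i)) := by
          apply Finset.sum_le_sum
          intro i _
          rcases eq_or_lt_of_le (hq i) with h0 | h0
          · rw [← h0]; simp
          · apply mul_le_mul_of_nonneg_left _ (hq i)
            apply hklein (ρ i) (hρ i)
            intro j hj
            have h1 : ∑ k, q k * a (ρ k) j = 0 := by
              rw [← ha_lin j, hμa j, hj]
            have h2 : ∀ k, 0 ≤ q k * a (ρ k) j := fun k =>
              mul_nonneg (hq k) (ha_nonneg (ρ k) (hρ k).1 j)
            have h3 := (Finset.sum_eq_zero_iff_of_nonneg (fun k _ => h2 k)).mp h1 i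
              (Finset.mem_univ i)
            rcases mul_eq_zero.mp h3 with h4 | h4
            · exact absurd h4 (ne_of_gt h0)
            · exact h4
  have : ∑ i, q i * vnEntropy (ρ i) = - ∑ i, q i * (- vnEntropy (ρ i)) := by
    rw [← Finset.sum_neg_distrib]
    apply Finset.sum_congr rfl; intro i _; ring
  rw [this]
  linarith [hmain]

section CPTP
variable {A B : Type*} [Fintype A] [Fintype B]
variable {M : Matrix A A ℂ → Matrix B B ℂ}

lemma IsCPTP.map_zero' (hM : IsCPTP M) : M 0 = 0 := by
  have h := hM.1 1 0 0
  rw [one_smul, add_zero, one_smul] at h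
  exact left_eq_add.mp h

lemma IsCPTP.map_smul' (hM : IsCPTP M) (c : ℂ) (ρ : Matrix A A ℂ) :
    M (c • ρ) = c • M ρ := by
  have h := hM.1 c ρ 0
  rw [add_zero, hM.map_zero', add_zero] at h
  exact h

lemma IsCPTP.map_add' (hM : IsCPTP M) (ρ σ : Matrix A A ℂ) :
    M (ρ + σ) = M ρ + M σ := by
  have h := hM.1 1 ρ σ
  rwa [one_smul, one_smul] at h

lemma IsCPTP.map_sum' (hM : IsCPTP M) {ι : Type*} (s : Finset ι) (f : ι → Matrix A A ℂ) :
    M (∑ i ∈ s, f i) = ∑ i ∈ s, M (f i) := by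
  classical
  induction s using Finset.induction_on with
  | empty => simpa using hM.map_zero'
  | @insert i s hni ih =>
      rw [Finset.sum_insert hni, Finset.sum_insert hni, hM.map_add', ih]

lemma IsCPTP.posSemidef_map (hM : IsCPTP M) {ρ : Matrix A A ℂ} (hρ : ρ.PosSemidef) :
    (M ρ).PosSemidef := by
  set σ : Matrix (A × Fin 1) (A × Fin 1) ℂ := Matrix.of fun p q => ρ p.1 q.1 with hσdef
  have hσ : σ.PosSemidef := by
    refine Matrix.PosSemidef.of_dotProduct_mulVec_nonneg ?_ ?_
    · ext p q
      rw [Matrix.conjTranspose_apply]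
      exact congrFun (congrFun hρ.1 p.1) q.1
    · intro x
      have hform : dotProduct (star x) (σ *ᵥ x)
          = dotProduct (star fun a => x (a, 0)) (ρ *ᵥ fun a => x (a, 0)) := by
        simp only [dotProduct, Matrix.mulVec, Fintype.sum_prod_type, Fin.sum_univ_one,
          Pi.star_apply, hσdef, Matrix.of_apply, dotProduct]
      rw [hform]
      exact hρ.dotProduct_mulVec_nonneg _
  have hbig := hM.2.1 1 σ hσ
  have hentry : ∀ b b', M ρ b b' = tensorExt M σ (b, 0) (b', 0) := by
    intro b b'; rfl
  refine Matrix.PosSemidef.of_dotProduct_mulVec_nonneg ?_ ?_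
  · ext b b'
    rw [Matrix.conjTranspose_apply, hentry b' b, hentry b b']
    have h1 := congrFun (congrFun hbig.1 (b, 0)) (b', 0)
    rw [Matrix.conjTranspose_apply] at h1
    exact h1
  · intro x
    have h2 := hbig.dotProduct_mulVec_nonneg (fun p => x p.1)
    have hform : dotProduct (star fun p : B × Fin 1 => x p.1)
          ((tensorExt M σ) *ᵥ fun p => x p.1)
        = dotProduct (star x) ((M ρ) *ᵥ x) := by
      simp only [dotProduct, Matrix.mulVec, Fintype.sum_prod_type, Fin.sum_univ_one,
        Pi.star_apply]
      apply Finset.sum_congr rfl; intro b _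
      congr 1
    rw [hform] at h2
    exact h2

lemma IsCPTP.isDensity_map (hM : IsCPTP M) {ρ : Matrix A A ℂ} (hρ : IsDensity ρ) :
    IsDensity (M ρ) :=
  ⟨hM.posSemidef_map hρ.1, (hM.2.2 ρ).trans hρ.2⟩

end CPTP

section Pure
variable {A : Type*} [Fintype A]

lemma pureState_posSemidef (ψ : A → ℂ) : (pureState ψ).PosSemidef := by
  have hcol : pureState ψ = Matrix.replicateCol Unit ψ * (Matrix.replicateCol Unit ψ)ᴴ := by
    ext a a'
    simp [pureState, Matrix.mul_apply, Matrix.replicateCol, Matrix.conjTranspose_apply]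
  rw [hcol]
  exact Matrix.posSemidef_self_mul_conjTranspose _

lemma pureState_trace (ψ : A → ℂ) (hψ : IsUnitVec ψ) : (pureState ψ).trace = 1 := by
  unfold Matrix.trace pureState
  have : ∀ a, ψ a * star (ψ a) = (Complex.normSq (ψ a) : ℂ) := by
    intro a; rw [(show star (ψ a) = (starRingEnd ℂ) (ψ a) from rfl), Complex.mul_conj]
  simp only [Matrix.diag_apply, Matrix.of_apply, this, ← Complex.ofReal_sum]
  simpa using congrArg Complex.ofReal hψ

lemma pureState_isDensity (ψ : A → ℂ) (hψ : IsUnitVec ψ) : IsDensity (pureState ψ) :=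
  ⟨pureState_posSemidef ψ, pureState_trace ψ hψ⟩

lemma pureState_real_smul (t : ℝ) (ψ : A → ℂ) :
    pureState (fun a => (t:ℂ) * ψ a) = ((t^2 : ℝ) : ℂ) • pureState ψ := by
  ext a a'
  simp only [pureState, Matrix.of_apply, Matrix.smul_apply, smul_eq_mul, star_mul',
    (show star ((t:ℂ)) = ((t:ℂ)) by rw [(show star ((t:ℂ)) = (starRingEnd ℂ) ((t:ℂ)) from rfl), Complex.conj_ofReal])]
  push_cast
  ring

end Pure

section Weyl
variable (d : ℕ) [NeZero d]

def wphase (k p : Fin d) : ℂ :=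
  Complex.exp (2 * (Real.pi : ℂ) * Complex.I * ((k : ℕ) : ℂ) * ((p : ℕ) : ℂ) / (d : ℂ))

lemma weyl_apply (j k a b : Fin d) :
    weyl d j k a b = if a = b + j then wphase d k b else 0 := rfl

lemma star_wphase (k p : Fin d) : star (wphase d k p) = Complex.exp
    (-(2 * (Real.pi : ℂ) * Complex.I * ((k : ℕ) : ℂ) * ((p : ℕ) : ℂ) / (d : ℂ))) := by
  rw [wphase, (show star (Complex.exp _) = (starRingEnd ℂ) (Complex.exp _) from rfl),
    ← Complex.exp_conj]
  congr 1
  simp [map_div₀, Complex.conj_I, map_ofNat]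
  ring

lemma wphase_mul_star_self (k p : Fin d) : star (wphase d k p) * wphase d k p = 1 := by
  rw [star_wphase, wphase, ← Complex.exp_add, neg_add_cancel, Complex.exp_zero]

lemma weyl_mem_unitaryGroup (j k : Fin d) : weyl d j k ∈ Matrix.unitaryGroup (Fin d) ℂ := by
  rw [Matrix.mem_unitaryGroup_iff']
  ext p q
  rw [Matrix.mul_apply]
  have hterm : ∀ a, (star (weyl d j k)) p a * weyl d j k a q
      = (if a = p + j then star (wphase d k p) else 0)
        * (if a = q + j then wphase d k q else 0) := by
    intro a
    rw [Matrix.star_apply, weyl_apply, weyl_apply, apply_ite (star : ℂ → ℂ), star_zero]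
  simp only [hterm]
  rw [Finset.sum_eq_single (p + j)]
  · rw [if_pos rfl]
    by_cases hpq : p = q
    · subst hpq; rw [if_pos rfl, wphase_mul_star_self, Matrix.one_apply_eq]
    · rw [if_neg (fun h : p + j = q + j => hpq (add_right_cancel h)), mul_zero,
        Matrix.one_apply_ne hpq]
  · intro a _ ha
    rw [if_neg ha, zero_mul]
  · intro h; exact absurd (Finset.mem_univ _) h

lemma sum_wphase_star (m l : Fin d) :
    ∑ k : Fin d, wphase d k m * star (wphase d k l) = if m = l then (d:ℂ) else 0 := by
  have hdc : ((d:ℕ):ℂ) ≠ 0 := Nat.cast_ne_zero.mpr (NeZero.ne d)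
  set z : ℂ := 2 * (Real.pi : ℂ) * Complex.I * (((m:ℕ):ℂ) - ((l:ℕ):ℂ)) / (d:ℂ) with hzdef
  have hterm : ∀ k : Fin d, wphase d k m * star (wphase d k l) = Complex.exp z ^ (k:ℕ) := by
    intro k
    rw [wphase, star_wphase, ← Complex.exp_add, ← Complex.exp_nat_mul]
    congr 1
    rw [hzdef]
    field_simp
    ring
  simp only [hterm]
  by_cases hml : m = l
  · subst hml
    have hz0 : z = 0 := by rw [hzdef]; simp
    rw [if_pos rfl]
    simp [hz0]
  · rw [if_neg hml]
    have hzd : Complex.exp z ^ d = 1 := by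
      rw [← Complex.exp_nat_mul]
      have : (d:ℂ) * z = (((m:ℕ):ℤ) - ((l:ℕ):ℤ) : ℤ) * (2 * (Real.pi:ℂ) * Complex.I) := by
        rw [hzdef]
        push_cast
        field_simp
      rw [this, Complex.exp_int_mul_two_pi_mul_I]
    have hz1 : Complex.exp z ≠ 1 := by
      intro h
      obtain ⟨nn, hn⟩ := Complex.exp_eq_one_iff.mp h
      rw [hzdef] at hn
      have h2 : (((m:ℕ):ℂ) - ((l:ℕ):ℂ)) = (nn:ℂ) * (d:ℂ) := by
        have hI : (2 * (Real.pi:ℂ) * Complex.I) ≠ 0 := by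
          simp [Real.pi_ne_zero, Complex.I_ne_zero, Complex.ofReal_ne_zero]
        field_simp at hn
        have h3 : (2 * (Real.pi:ℂ) * Complex.I) * (((m:ℕ):ℂ) - ((l:ℕ):ℂ))
            = (2 * (Real.pi:ℂ) * Complex.I) * ((nn:ℂ) * (d:ℂ)) := by
          linear_combination (2 * (Real.pi:ℂ) * Complex.I) * hn
        exact mul_left_cancel₀ hI h3
      have h4 : (((m:ℕ):ℤ) - ((l:ℕ):ℤ)) = nn * (d:ℤ) := by
        exact_mod_cast h2
      have h5 : ((m:ℕ):ℤ) ≠ ((l:ℕ):ℤ) := by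
        intro h6
        exact hml (Fin.ext (by exact_mod_cast h6))
      have h6 : ((m:ℕ):ℤ) < d := by exact_mod_cast m.2
      have h7 : ((l:ℕ):ℤ) < d := by exact_mod_cast l.2
      have h8 : (0:ℤ) ≤ ((m:ℕ):ℤ) := by positivity
      have h9 : (0:ℤ) ≤ ((l:ℕ):ℤ) := by positivity
      rcases lt_trichotomy nn 0 with hnn | hnn | hnn
      · nlinarith [h4, hnn]
      · rw [hnn, zero_mul] at h4; omega
      · nlinarith [h4, hnn]
    rw [Fin.sum_univ_eq_sum_range (fun i => Complex.exp z ^ i) d, geom_sum_eq hz1,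
      hzd, sub_self, zero_div]

lemma weyl_conj_apply (j k : Fin d) (X : Matrix (Fin d) (Fin d) ℂ) (a b : Fin d) :
    (weyl d j k * X * (weyl d j k)ᴴ) a b
      = wphase d k (a - j) * star (wphase d k (b - j)) * X (a - j) (b - j) := by
  rw [Matrix.mul_apply]
  have h1 : ∀ q, (weyl d j k * X) a q = wphase d k (a - j) * X (a - j) q := by
    intro q
    rw [Matrix.mul_apply, Finset.sum_eq_single (a - j)]
    · rw [weyl_apply, if_pos (by rw [sub_add_cancel])]
    · intro p _ hp
      rw [weyl_apply, if_neg, zero_mul]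
      intro hh
      exact hp (by rw [hh, add_sub_cancel_right])
    · intro h; exact absurd (Finset.mem_univ _) h
  simp only [h1, Matrix.conjTranspose_apply]
  rw [Finset.sum_eq_single (b - j)]
  · rw [weyl_apply, if_pos (by rw [sub_add_cancel])]
    ring
  · intro q _ hq
    rw [weyl_apply, if_neg, star_zero, mul_zero]
    intro hh
    exact hq (by rw [hh, add_sub_cancel_right])
  · intro h; exact absurd (Finset.mem_univ _) h

lemma weyl_twirl (X : Matrix (Fin d) (Fin d) ℂ) :
    ∑ j : Fin d, ∑ k : Fin d, weyl d j k * X * (weyl d j k)ᴴ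
      = ((d:ℂ) * X.trace) • (1 : Matrix (Fin d) (Fin d) ℂ) := by
  ext a b
  simp only [Matrix.sum_apply, weyl_conj_apply]
  have h1 : ∀ j : Fin d, ∑ k : Fin d,
      wphase d k (a-j) * star (wphase d k (b-j)) * X (a-j) (b-j)
      = (if a - j = b - j then (d:ℂ) else 0) * X (a-j) (b-j) := by
    intro j; rw [← Finset.sum_mul, sum_wphase_star]
  simp only [h1]
  by_cases hab : a = b
  · subst hab
    simp only [if_pos rfl]
    rw [← Finset.mul_sum]
    have h2 : ∑ j : Fin d, X (a-j) (a-j) = X.trace := by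
      rw [Matrix.trace]
      exact Fintype.sum_equiv (Equiv.subLeft a) _ _ (fun j => rfl)
    rw [h2, Matrix.smul_apply, Matrix.one_apply_eq, smul_eq_mul, if_pos trivial, mul_one]
  · have h3 : ∀ j : Fin d, ¬ (a - j = b - j) := by
      intro j h
      exact hab (by simpa using congrArg (fun x => x + j) h)
    rw [Matrix.smul_apply, Matrix.one_apply_ne hab, smul_eq_mul, mul_zero]
    apply Finset.sum_eq_zero
    intro j _
    rw [if_neg (h3 j), zero_mul]

end Weyl

section Blocks
variable {A D : Type*} [Fintype A] [Fintype D] [DecidableEq D]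

/-- The `x`-th diagonal block of a matrix on `A × D`. -/
def dblock (σ : Matrix (A × D) (A × D) ℂ) (x : D) : Matrix A A ℂ :=
  Matrix.of fun a a' => σ (a, x) (a', x)

lemma dblock_posSemidef {σ : Matrix (A × D) (A × D) ℂ} (hσ : σ.PosSemidef) (x : D) :
    (dblock σ x).PosSemidef := by
  refine Matrix.PosSemidef.of_dotProduct_mulVec_nonneg ?_ ?_
  · ext a a'
    rw [Matrix.conjTranspose_apply]
    exact congrFun (congrFun hσ.1 (a, x)) (a', x)
  · intro v
    have h := hσ.dotProduct_mulVec_nonneg (fun p : A × D => if p.2 = x then v p.1 else 0)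
    have hform : dotProduct (star fun p : A × D => if p.2 = x then v p.1 else 0)
          (σ *ᵥ fun p : A × D => if p.2 = x then v p.1 else 0)
        = dotProduct (star v) ((dblock σ x) *ᵥ v) := by
      simp only [dotProduct, Matrix.mulVec, Fintype.sum_prod_type, Pi.star_apply,
        dblock, Matrix.of_apply, dotProduct, apply_ite (star : ℂ → ℂ), star_zero,
        ite_mul, zero_mul, mul_ite, mul_zero]
      apply Finset.sum_congr rfl; intro a _
      rw [Finset.sum_ite_eq' Finset.univ x]
      simp only [Finset.mem_univ, if_true]
      congr 1
      apply Finset.sum_congr rfl; intro a' _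
      rw [Finset.sum_ite_eq' Finset.univ x]
      simp
    rw [hform] at h
    exact h

lemma sum_trace_dblock (σ : Matrix (A × D) (A × D) ℂ) :
    ∑ x : D, (dblock σ x).trace = σ.trace := by
  simp only [Matrix.trace, Matrix.diag_apply, dblock, Matrix.of_apply, Fintype.sum_prod_type]
  exact Finset.sum_comm

lemma dblock_pureState (ψ : (A × D) → ℂ) (x : D) :
    dblock (pureState ψ) x = pureState (fun a => ψ (a, x)) := rfl

end Blocks

section Conj
variable {n : Type*} [Fintype n] [DecidableEq n]

lemma trace_unitary_conj {U : Matrix n n ℂ} (hU : U ∈ Matrix.unitaryGroup n ℂ)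
    (Y : Matrix n n ℂ) : (U * Y * Uᴴ).trace = Y.trace := by
  rw [Matrix.trace_mul_cycle, ← Matrix.star_eq_conjTranspose U, Matrix.mem_unitaryGroup_iff'.mp hU, one_mul]

lemma isDensity_unitary_conj {U : Matrix n n ℂ} (hU : U ∈ Matrix.unitaryGroup n ℂ)
    {Y : Matrix n n ℂ} (hY : IsDensity Y) : IsDensity (U * Y * Uᴴ) :=
  ⟨hY.1.mul_mul_conjTranspose_same U, (trace_unitary_conj hU Y).trans hY.2⟩

end Conj

section Shor
variable {A : Type*} [Fintype A] [DecidableEq A] [Nonempty A]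
variable (d : ℕ) [NeZero d]
variable {M : Matrix A A ℂ → Matrix (Fin d) (Fin d) ℂ}

lemma shorChannel_eq_sum_blocks (σ : Matrix (A × (Fin d × Fin d)) (A × (Fin d × Fin d)) ℂ) :
    shorChannel d M σ = ∑ x : Fin d × Fin d,
      weyl d x.1 x.2 * M (dblock σ x) * (weyl d x.1 x.2)ᴴ := by
  rw [shorChannel, Fintype.sum_prod_type]
  rfl

lemma shorChannel_isDensity (hM : IsCPTP M)
    {σ : Matrix (A × (Fin d × Fin d)) (A × (Fin d × Fin d)) ℂ} (hσ : IsDensity σ) :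
    IsDensity (shorChannel d M σ) := by
  rw [shorChannel_eq_sum_blocks]
  constructor
  · apply posSemidef_sum
    intro x _
    exact (hM.posSemidef_map (dblock_posSemidef hσ.1 x)).mul_mul_conjTranspose_same _
  · rw [Matrix.trace_sum]
    have h1 : ∀ x : Fin d × Fin d, (weyl d x.1 x.2 * M (dblock σ x) * (weyl d x.1 x.2)ᴴ).trace
        = (dblock σ x).trace := by
      intro x
      rw [trace_unitary_conj (weyl_mem_unitaryGroup d x.1 x.2), hM.2.2]
    rw [Finset.sum_congr rfl fun x _ => h1 x, sum_trace_dblock, hσ.2]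

/-- The minimum-output-entropy set for `M`. -/
lemma smin_set_nonempty : ∃ ψ : A → ℂ, IsUnitVec ψ := by
  refine ⟨fun a => if a = Classical.arbitrary A then 1 else 0, ?_⟩
  unfold IsUnitVec
  rw [Finset.sum_eq_single (Classical.arbitrary A)]
  · simp
  · intro b _ hb; simp [hb]
  · intro h; exact absurd (Finset.mem_univ _) h

lemma smin_bddBelow (hM : IsCPTP M) :
    BddBelow {x | ∃ ψ : A → ℂ, IsUnitVec ψ ∧ x = vnEntropy (M (pureState ψ))} := by
  refine ⟨0, fun x hx => ?_⟩
  obtain ⟨ψ, hψ, rfl⟩ := hx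
  exact vnEntropy_nonneg (hM.isDensity_map (pureState_isDensity ψ hψ))

lemma smin_elem_le_log (hM : IsCPTP M) {x : ℝ}
    (hx : x ∈ {x | ∃ ψ : A → ℂ, IsUnitVec ψ ∧ x = vnEntropy (M (pureState ψ))}) :
    x ≤ Real.log d := by
  obtain ⟨ψ, hψ, rfl⟩ := hx
  have := vnEntropy_le_log_card (hM.isDensity_map (pureState_isDensity ψ hψ))
  simpa [Fintype.card_fin] using this

lemma smin_le (hM : IsCPTP M) {ψ : A → ℂ} (hψ : IsUnitVec ψ) :
    Smin M ≤ vnEntropy (M (pureState ψ)) := by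
  rw [Smin]
  exact csInf_le (smin_bddBelow (d := d) hM) ⟨ψ, hψ, rfl⟩

lemma smin_le_log (hM : IsCPTP M) : Smin M ≤ Real.log d := by
  obtain ⟨ψ, hψ⟩ := smin_set_nonempty (A := A)
  exact le_trans (smin_le d hM hψ)
    (smin_elem_le_log d hM ⟨ψ, hψ, rfl⟩)

end Shor

section Converse
variable {A : Type*} [Fintype A] [DecidableEq A] [Nonempty A]
variable (d : ℕ) [NeZero d]
variable {M : Matrix A A ℂ → Matrix (Fin d) (Fin d) ℂ}

lemma maximally_mixed_isDensity :
    IsDensity ((((d:ℕ):ℂ))⁻¹ • (1 : Matrix (Fin d) (Fin d) ℂ)) := by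
  have hdr : (0:ℝ) < (d:ℝ) := Nat.cast_pos.mpr (Nat.pos_of_ne_zero (NeZero.ne d))
  constructor
  · have h1 := posSemidef_smul_real (q := (d:ℝ)⁻¹) (by positivity)
      (Matrix.PosSemidef.one (n := Fin d) (R := ℂ))
    have h2 : (((d:ℝ)⁻¹ : ℝ) : ℂ) = (((d:ℕ):ℂ))⁻¹ := by push_cast; ring
    rwa [h2] at h1
  · rw [Matrix.trace_smul, Matrix.trace_one, smul_eq_mul]
    rw [Fintype.card_fin]
    field_simp
    exact div_self (Nat.cast_ne_zero.mpr (NeZero.ne d))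

lemma shor_converse_state (hM : IsCPTP M) {ψ : (A × (Fin d × Fin d)) → ℂ}
    (hψ : IsUnitVec ψ) :
    Smin M ≤ vnEntropy (shorChannel d M (pureState ψ)) := by
  set φ : (Fin d × Fin d) → A → ℂ := fun x a => ψ (a, x) with hφdef
  set q : (Fin d × Fin d) → ℝ := fun x => ∑ a, Complex.normSq (φ x a) with hqdef
  have hq0 : ∀ x, 0 ≤ q x := fun x => Finset.sum_nonneg fun a _ => Complex.normSq_nonneg _
  have hqsum : ∑ x, q x = 1 := by
    unfold IsUnitVec at hψ
    calc ∑ x, q x = ∑ x, ∑ a, Complex.normSq (ψ (a, x)) := rfl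
      _ = ∑ a, ∑ x, Complex.normSq (ψ (a, x)) := Finset.sum_comm
      _ = 1 := by rw [← hψ, Fintype.sum_prod_type]
  set u : (Fin d × Fin d) → A → ℂ := fun x a => (((Real.sqrt (q x))⁻¹ : ℝ) : ℂ) * φ x a
    with hudef
  have huunit : ∀ x, q x ≠ 0 → IsUnitVec (u x) := by
    intro x hx
    unfold IsUnitVec
    have h1 : ∀ a, Complex.normSq (u x a)
        = (Real.sqrt (q x))⁻¹ * (Real.sqrt (q x))⁻¹ * Complex.normSq (φ x a) := by
      intro a
      rw [hudef]
      simp only [Complex.normSq_mul, Complex.normSq_ofReal]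
    simp only [h1]
    rw [← Finset.mul_sum]
    have h2 : ∑ a, Complex.normSq (φ x a) = q x := rfl
    rw [h2, ← mul_inv, Real.mul_self_sqrt (hq0 x)]
    field_simp
  have hpure : ∀ x, q x ≠ 0 → pureState (φ x) = ((q x : ℝ):ℂ) • pureState (u x) := by
    intro x hx
    have h1 : pureState (u x) = ((((Real.sqrt (q x))⁻¹)^2 : ℝ) : ℂ) • pureState (φ x) := by
      rw [hudef]
      exact pureState_real_smul ((Real.sqrt (q x))⁻¹) (φ x)
    rw [h1, smul_smul]
    have h2 : ((q x : ℝ):ℂ) * ((((Real.sqrt (q x))⁻¹)^2 : ℝ) : ℂ) = 1 := by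
      rw [← Complex.ofReal_mul]
      have : (q x) * ((Real.sqrt (q x))⁻¹)^2 = 1 := by
        rw [inv_pow, Real.sq_sqrt (hq0 x)]
        field_simp
      rw [this, Complex.ofReal_one]
    rw [h2, one_smul]
  set τ : (Fin d × Fin d) → Matrix (Fin d) (Fin d) ℂ := fun x =>
    if q x = 0 then (((d:ℕ):ℂ))⁻¹ • 1
    else weyl d x.1 x.2 * M (pureState (u x)) * (weyl d x.1 x.2)ᴴ with hτdef
  have hτdens : ∀ x, IsDensity (τ x) := by
    intro x
    rw [hτdef]
    simp only
    split_ifs with hqx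
    · exact maximally_mixed_isDensity d
    · exact isDensity_unitary_conj (weyl_mem_unitaryGroup d x.1 x.2)
        (hM.isDensity_map (pureState_isDensity _ (huunit x hqx)))
  have hNdecomp : shorChannel d M (pureState ψ) = ∑ x, ((q x : ℝ):ℂ) • τ x := by
    rw [shorChannel_eq_sum_blocks]
    apply Finset.sum_congr rfl; intro x _
    rw [dblock_pureState]
    rcases eq_or_ne (q x) 0 with hqx | hqx
    · have hφ0 : (fun a => ψ (a, x)) = (fun _ : A => (0:ℂ)) := by
        funext a
        have h2 := (Finset.sum_eq_zero_iff_of_nonneg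
          (fun a _ => Complex.normSq_nonneg (φ x a))).mp hqx a (Finset.mem_univ a)
        exact Complex.normSq_eq_zero.mp h2
      rw [hφ0]
      have h3 : pureState (fun _ : A => (0:ℂ)) = 0 := by
        ext a a'; simp [pureState]
      rw [h3, hM.map_zero', Matrix.mul_zero, Matrix.zero_mul, hqx]
      simp
    · rw [show (fun a => ψ (a,x)) = φ x from rfl, hpure x hqx, hM.map_smul',
        Matrix.mul_smul, Matrix.smul_mul, hτdef]
      simp only
      rw [if_neg hqx]
  rw [hNdecomp]
  have hconc := vnEntropy_concave q τ hq0 hqsum hτdens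
  refine le_trans ?_ hconc
  calc Smin M = ∑ x, q x * Smin M := by rw [← Finset.sum_mul, hqsum, one_mul]
    _ ≤ ∑ x, q x * vnEntropy (τ x) := by
        apply Finset.sum_le_sum
        intro x _
        apply mul_le_mul_of_nonneg_left _ (hq0 x)
        rw [hτdef]
        simp only
        split_ifs with hqx
        · rw [vnEntropy_smul_one]
          exact smin_le_log d hM
        · rw [vnEntropy_unitary_conj (weyl_mem_unitaryGroup d x.1 x.2)
            (hM.isDensity_map (pureState_isDensity _ (huunit x hqx))).1.1]
          exact smin_le d hM (huunit x hqx)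

end Converse

section Achieve
variable {A : Type*} [Fintype A] [DecidableEq A] [Nonempty A]
variable (d : ℕ) [NeZero d]
variable {M : Matrix A A ℂ → Matrix (Fin d) (Fin d) ℂ}

lemma shor_achieve (hM : IsCPTP M) {ψ : A → ℂ} (hψ : IsUnitVec ψ) :
    ∃ (k : ℕ) (p : Fin k → ℝ) (Ψ : Fin k → ((A × (Fin d × Fin d)) → ℂ)),
    (∀ i, 0 ≤ p i) ∧ (∑ i, p i = 1) ∧ (∀ i, IsUnitVec (Ψ i)) ∧
    Real.log d - vnEntropy (M (pureState ψ))
      = vnEntropy (shorChannel d M (∑ i, (p i : ℂ) • pureState (Ψ i)))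
        - ∑ i, p i * vnEntropy (shorChannel d M (pureState (Ψ i))) := by
  have hd0 : (0:ℝ) < (d:ℝ) := Nat.cast_pos.mpr (Nat.pos_of_ne_zero (NeZero.ne d))
  have hdc : ((d:ℕ):ℂ) ≠ 0 := Nat.cast_ne_zero.mpr (NeZero.ne d)
  set e : Fin (d * d) ≃ Fin d × Fin d := finProdFinEquiv.symm with hedef
  refine ⟨d * d, fun _ => ((d:ℝ) * d)⁻¹,
    fun i p => ψ p.1 * (if p.2 = e i then 1 else 0), ?_, ?_, ?_, ?_⟩
  · intro i; positivity
  · rw [Finset.sum_const, Finset.card_univ, Fintype.card_fin, nsmul_eq_mul]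
    push_cast
    field_simp
  · intro i
    unfold IsUnitVec
    rw [Fintype.sum_prod_type]
    have h1 : ∀ a : A, ∀ x : Fin d × Fin d,
        Complex.normSq (ψ a * (if x = e i then 1 else 0))
        = Complex.normSq (ψ a) * (if x = e i then 1 else 0) := by
      intro a x; split_ifs <;> simp
    simp only [h1]
    have h2 : ∀ a : A, ∑ x : Fin d × Fin d, Complex.normSq (ψ a) * (if x = e i then 1 else 0)
        = Complex.normSq (ψ a) := by
      intro a
      rw [← Finset.mul_sum, Finset.sum_ite_eq' Finset.univ (e i)]
      simp
    simp only [h2]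
    exact hψ
  · -- the entropy computation
    set c : ℝ := ((d:ℝ) * d)⁻¹ with hcdef
    set Ψ : Fin (d*d) → ((A × (Fin d × Fin d)) → ℂ) :=
      fun i p => ψ p.1 * (if p.2 = e i then 1 else 0) with hΨdef
    have hblock : ∀ (i : Fin (d*d)) (x : Fin d × Fin d),
        dblock (pureState (Ψ i)) x = if x = e i then pureState ψ else 0 := by
      intro i x
      by_cases hx : x = e i
      · rw [if_pos hx]
        ext a a'
        simp [dblock, pureState, hΨdef, hx]
      · rw [if_neg hx]
        ext a a'
        simp [dblock, pureState, hΨdef, hx]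
    have hNi : ∀ i, shorChannel d M (pureState (Ψ i))
        = weyl d (e i).1 (e i).2 * M (pureState ψ) * (weyl d (e i).1 (e i).2)ᴴ := by
      intro i
      rw [shorChannel_eq_sum_blocks, Finset.sum_eq_single (e i)]
      · rw [hblock, if_pos rfl]
      · intro x _ hx
        rw [hblock, if_neg hx, hM.map_zero', Matrix.mul_zero, Matrix.zero_mul]
      · intro h; exact absurd (Finset.mem_univ _) h
    have hSi : ∀ i, vnEntropy (shorChannel d M (pureState (Ψ i)))
        = vnEntropy (M (pureState ψ)) := by
      intro i
      rw [hNi i]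
      exact vnEntropy_unitary_conj (weyl_mem_unitaryGroup d (e i).1 (e i).2)
        (hM.isDensity_map (pureState_isDensity ψ hψ)).1.1
    have hblockavg : ∀ x : Fin d × Fin d,
        dblock (∑ i, ((c:ℝ) : ℂ) • pureState (Ψ i)) x = ((c:ℝ):ℂ) • pureState ψ := by
      intro x
      ext a a'
      have h1 : dblock (∑ i, ((c:ℝ):ℂ) • pureState (Ψ i)) x a a'
          = ∑ i, ((c:ℝ):ℂ) * pureState (Ψ i) (a, x) (a', x) := by
        simp [dblock, Matrix.sum_apply]
      rw [h1]
      have h2 : ∀ i, pureState (Ψ i) (a, x) (a', x)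
          = (if x = e i then (1:ℂ) else 0) * pureState ψ a a' := by
        intro i
        by_cases hx : x = e i <;> simp [pureState, hΨdef, hx]
      simp only [h2]
      rw [Finset.sum_eq_single (e.symm x)]
      · rw [if_pos (by simp), one_mul, Matrix.smul_apply, smul_eq_mul]
      · intro i _ hi
        rw [if_neg, zero_mul, mul_zero]
        intro hh
        exact hi (by rw [hh, Equiv.symm_apply_apply])
      · intro h; exact absurd (Finset.mem_univ _) h
    have hNavg : shorChannel d M (∑ i, ((c:ℝ):ℂ) • pureState (Ψ i))
        = (((d:ℕ):ℂ))⁻¹ • 1 := by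
      rw [shorChannel_eq_sum_blocks]
      have h1 : ∀ x : Fin d × Fin d,
          weyl d x.1 x.2 * M (dblock (∑ i, ((c:ℝ):ℂ) • pureState (Ψ i)) x)
            * (weyl d x.1 x.2)ᴴ
          = ((c:ℝ):ℂ) • (weyl d x.1 x.2 * M (pureState ψ) * (weyl d x.1 x.2)ᴴ) := by
        intro x
        rw [hblockavg x, hM.map_smul', Matrix.mul_smul, Matrix.smul_mul]
      rw [Finset.sum_congr rfl fun x _ => h1 x, ← Finset.smul_sum]
      have h2 : ∑ x : Fin d × Fin d, weyl d x.1 x.2 * M (pureState ψ) * (weyl d x.1 x.2)ᴴ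
          = ((d:ℂ) * (M (pureState ψ)).trace) • 1 := by
        rw [Fintype.sum_prod_type]
        exact weyl_twirl d (M (pureState ψ))
      rw [h2, (hM.2.2 _).trans (pureState_trace ψ hψ), mul_one, smul_smul]
      congr 1
      rw [hcdef]
      push_cast
      field_simp
    rw [hNavg, vnEntropy_smul_one, Finset.sum_congr rfl fun i _ => congrArg (_ * ·) (hSi i)]
    rw [← Finset.sum_mul, Finset.sum_const, Finset.card_univ, Fintype.card_fin, nsmul_eq_mul]
    have h3 : ((d * d : ℕ) : ℝ) * c = 1 := by
      rw [hcdef]; push_cast; field_simp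
    rw [h3, one_mul]

end Achieve

end QI
end Aux

/-- the Holevo capacity of the Shor-construction channel `N` built from
`M : A → B` (with `|B| = d`) equals `log d - S_min(M)`. -/
theorem shor_channel_holevo {A : Type*} [Fintype A] [DecidableEq A] [Nonempty A]
    (d : ℕ) [NeZero d]
    (M : Matrix A A ℂ → Matrix (Fin d) (Fin d) ℂ) (hM : QI.IsCPTP M) :
    QI.holevo (QI.shorChannel d M) = Real.log d - QI.Smin M := by
  classical
  set N := QI.shorChannel d M with hNdef
  set S : Set ℝ := {x | ∃ (k : ℕ) (p : Fin k → ℝ) (ψ : Fin k → ((A × (Fin d × Fin d)) → ℂ)),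
    (∀ i, 0 ≤ p i) ∧ (∑ i, p i = 1) ∧ (∀ i, QI.IsUnitVec (ψ i)) ∧
    x = QI.vnEntropy (N (∑ i, (p i : ℂ) • QI.pureState (ψ i)))
        - ∑ i, p i * QI.vnEntropy (N (QI.pureState (ψ i)))} with hSdef
  set T : Set ℝ := {x | ∃ ψ : A → ℂ, QI.IsUnitVec ψ ∧ x = QI.vnEntropy (M (QI.pureState ψ))}
    with hTdef
  have hST : QI.holevo N = sSup S := rfl
  have hTS : QI.Smin M = sInf T := rfl
  -- converse
  have hub : ∀ x ∈ S, x ≤ Real.log d - QI.Smin M := by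
    rintro x ⟨k, p, ψ, hp0, hps, hunit, rfl⟩
    have hρ : QI.IsDensity (∑ i, (p i : ℂ) • QI.pureState (ψ i)) := by
      constructor
      · exact QI.posSemidef_sum _ _ fun i _ =>
          QI.posSemidef_smul_real (hp0 i) (QI.pureState_posSemidef (ψ i))
      · rw [Matrix.trace_sum]
        have h1 : ∀ i, ((p i : ℂ) • QI.pureState (ψ i)).trace = (p i : ℂ) := by
          intro i
          rw [Matrix.trace_smul, QI.pureState_trace _ (hunit i), smul_eq_mul, mul_one]
        rw [Finset.sum_congr rfl fun i _ => h1 i, ← Complex.ofReal_sum, hps,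
          Complex.ofReal_one]
    have h1 : QI.vnEntropy (N (∑ i, (p i : ℂ) • QI.pureState (ψ i))) ≤ Real.log d := by
      have := QI.vnEntropy_le_log_card (QI.shorChannel_isDensity d hM hρ)
      simpa [Fintype.card_fin] using this
    have h2 : QI.Smin M ≤ ∑ i, p i * QI.vnEntropy (N (QI.pureState (ψ i))) := by
      calc QI.Smin M = ∑ i, p i * QI.Smin M := by rw [← Finset.sum_mul, hps, one_mul]
        _ ≤ _ := Finset.sum_le_sum fun i _ => mul_le_mul_of_nonneg_left
            (QI.shor_converse_state d hM (hunit i)) (hp0 i)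
    linarith
  -- achievability
  have hach : ∀ s ∈ T, (Real.log d - s) ∈ S := by
    rintro s ⟨ψ, hψ, rfl⟩
    exact QI.shor_achieve d hM hψ
  obtain ⟨ψ₀, hψ₀⟩ := QI.smin_set_nonempty (A := A)
  have hTne : T.Nonempty := ⟨_, ψ₀, hψ₀, rfl⟩
  have hSne : S.Nonempty := ⟨_, hach _ ⟨ψ₀, hψ₀, rfl⟩⟩
  have hSbdd : BddAbove S := ⟨Real.log d - QI.Smin M, hub⟩
  rw [hST]
  apply le_antisymm
  · exact csSup_le hSne hub
  · have h3 : ∀ s ∈ T, Real.log d - sSup S ≤ s := by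
      intro s hs
      have := le_csSup hSbdd (hach s hs)
      linarith
    have h4 : Real.log d - sSup S ≤ sInf T := le_csInf hTne h3
    rw [hTS]
    linarith
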